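/- arXiv:1703.02326 — 3 statements merged into one kernel-verified Lean document; each statement's English description precedes it below -/
import Mathlib

section
/- Let W be a symmetric positive definite n×n matrix and let S_c (n×k) and S_nc (n×m) be full column-rank matrices. Define W_nc = W - α_c · W S_c (S_cᵀ W S_c)⁻¹ S_cᵀ W with α_c ∈ {0,1}. For torques τ = W_nc S_nc (S_ncᵀ W_nc S_nc)⁻¹ τ_nc (assuming S_ncᵀ W_nc S_nc invertible), if α_c = 1 then S_cᵀ τ = 0, i.e., the non-contact control input does not affect the contact subsystem. -/
open Matrix

theorem Matrix.transpose_mul_sub_weighted_projection_eq_zero {R ι κ : Type*} [CommRing R]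
    [Fintype ι] [Fintype κ] [DecidableEq κ]
    (W : Matrix ι ι R) (S : Matrix ι κ R) (hS : IsUnit (Sᵀ * W * S)) :
    Sᵀ * (W - W * S * (Sᵀ * W * S)⁻¹ * Sᵀ * W) = 0 := by
  have hcancel : (Sᵀ * W * S) * (Sᵀ * W * S)⁻¹ = 1 :=
    mul_nonsing_inv _ ((isUnit_iff_isUnit_det _).mp hS)
  calc Sᵀ * (W - W * S * (Sᵀ * W * S)⁻¹ * Sᵀ * W)
      = Sᵀ * W - (Sᵀ * W * S) * (Sᵀ * W * S)⁻¹ * (Sᵀ * W) := by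
        simp only [Matrix.mul_sub, Matrix.mul_assoc]
    _ = 0 := by rw [hcancel, Matrix.one_mul, sub_self]

theorem noncontact_input_decoupled_from_contact_general {n k m : ℕ}
    (W : Matrix (Fin n) (Fin n) ℝ)
    (Sc : Matrix (Fin n) (Fin k) ℝ) (Snc : Matrix (Fin n) (Fin m) ℝ)
    (hSc : IsUnit (Scᵀ * W * Sc))
    (Wnc : Matrix (Fin n) (Fin n) ℝ)
    (hWnc : Wnc = W - W * Sc * (Scᵀ * W * Sc)⁻¹ * Scᵀ * W)
    (τnc : Fin m → ℝ) :
    Scᵀ.mulVec ((Wnc * Snc * (Sncᵀ * Wnc * Snc)⁻¹).mulVec τnc) = 0 := by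
  have hcontact : Scᵀ * Wnc = 0 :=
    hWnc ▸ transpose_mul_sub_weighted_projection_eq_zero W Sc hSc
  rw [mulVec_mulVec, Matrix.mul_assoc, Matrix.mul_assoc, ← Matrix.mul_assoc Scᵀ, hcontact,
    Matrix.zero_mul, zero_mulVec]

theorem noncontact_input_decoupled_from_contact {n k m : ℕ}
    (W : Matrix (Fin n) (Fin n) ℝ)
    (Sc : Matrix (Fin n) (Fin k) ℝ) (Snc : Matrix (Fin n) (Fin m) ℝ)
    (hW : W.PosDef) (hWsym : W.IsSymm)
    (hSc : IsUnit (Scᵀ * W * Sc))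
    (Wnc : Matrix (Fin n) (Fin n) ℝ)
    (hWnc : Wnc = W - W * Sc * (Scᵀ * W * Sc)⁻¹ * Scᵀ * W)
    (hSnc : IsUnit (Sncᵀ * Wnc * Snc))
    (τnc : Fin m → ℝ) :
    Scᵀ.mulVec ((Wnc * Snc * (Sncᵀ * Wnc * Snc)⁻¹).mulVec τnc) = 0 :=
  noncontact_input_decoupled_from_contact_general W Sc Snc hSc Wnc hWnc τnc
end

section
/- Let W be symmetric positive definite, S_c, S_nc full column-rank matrices with S_cᵀ W S_c, S_ncᵀ W S_nc invertible, and define W_c = W - W S_nc (S_ncᵀ W S_nc)⁻¹ S_ncᵀ W and W_nc = W - W S_c (S_cᵀ W S_c)⁻¹ S_cᵀ W (coequal case α_c = α_nc = 1). Assume S_cᵀ W_c S_c and S_ncᵀ W_nc S_nc are invertible. Then for τ = W_c S_c (S_cᵀ W_c S_c)⁻¹ τ_c + W_nc S_nc (S_ncᵀ W_nc S_nc)⁻¹ τ_nc, it holds that S_cᵀ τ = τ_c and S_ncᵀ τ = τ_nc for all vectors τ_c, τ_nc. -/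
open Matrix

/-
The weight `W_nc = W - W S_c (S_cᵀ W S_c)⁻¹ S_cᵀ W` is annihilated by `S_cᵀ` (and symmetrically
`S_ncᵀ W_c = 0`), while `W_c S_c (S_cᵀ W_c S_c)⁻¹` is a right inverse of `S_cᵀ`. Hence applying
`S_cᵀ` to `τ` keeps the first summand as `τ_c` and kills the second, and likewise for `S_ncᵀ`.
-/

variable {R ι κ μ : Type*} [CommRing R] [Fintype ι] [Fintype κ] [DecidableEq κ]

theorem transpose_mul_sub_mul_inv_mul_eq_zero {W : Matrix ι ι R} {S : Matrix ι κ R}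
    (hS : IsUnit (Sᵀ * W * S)) :
    Sᵀ * (W - W * S * (Sᵀ * W * S)⁻¹ * Sᵀ * W) = 0 := by
  have hcancel : Sᵀ * (W * S * (Sᵀ * W * S)⁻¹ * Sᵀ * W)
      = (Sᵀ * W * S) * (Sᵀ * W * S)⁻¹ * (Sᵀ * W) := by
    simp only [Matrix.mul_assoc]
  rw [Matrix.mul_sub, hcancel, mul_nonsing_inv _ ((isUnit_iff_isUnit_det _).mp hS),
    Matrix.one_mul, sub_self]

theorem transpose_mulVec_mul_inv_mulVec_add [Fintype μ] [DecidableEq μ]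
    {M N : Matrix ι ι R} {S : Matrix ι κ R} {T : Matrix ι μ R}
    (hS : IsUnit (Sᵀ * M * S)) (hSN : Sᵀ * N = 0) (x : κ → R) (y : μ → R) :
    Sᵀ *ᵥ ((M * S * (Sᵀ * M * S)⁻¹) *ᵥ x + (N * T * (Tᵀ * N * T)⁻¹) *ᵥ y) = x := by
  have hright_inv : Sᵀ * (M * S * (Sᵀ * M * S)⁻¹) = 1 := by
    rw [← Matrix.mul_assoc, ← Matrix.mul_assoc,
      mul_nonsing_inv _ ((isUnit_iff_isUnit_det _).mp hS)]
  have hkill : Sᵀ * (N * T * (Tᵀ * N * T)⁻¹) = 0 := by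
    rw [← Matrix.mul_assoc, ← Matrix.mul_assoc, hSN, Matrix.zero_mul, Matrix.zero_mul]
  rw [mulVec_add, mulVec_mulVec, mulVec_mulVec, hright_inv, hkill, one_mulVec, zero_mulVec,
    add_zero]

theorem coequal_task_decomposition_general {n k m : ℕ}
    (W : Matrix (Fin n) (Fin n) ℝ)
    (Sc : Matrix (Fin n) (Fin k) ℝ) (Snc : Matrix (Fin n) (Fin m) ℝ)
    (hScW : IsUnit (Scᵀ * W * Sc)) (hSncW : IsUnit (Sncᵀ * W * Snc))
    (Wc Wnc : Matrix (Fin n) (Fin n) ℝ)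
    (hWc : Wc = W - W * Snc * (Sncᵀ * W * Snc)⁻¹ * Sncᵀ * W)
    (hWnc : Wnc = W - W * Sc * (Scᵀ * W * Sc)⁻¹ * Scᵀ * W)
    (hScWc : IsUnit (Scᵀ * Wc * Sc)) (hSncWnc : IsUnit (Sncᵀ * Wnc * Snc))
    (τc : Fin k → ℝ) (τnc : Fin m → ℝ) :
    let τ := (Wc * Sc * (Scᵀ * Wc * Sc)⁻¹).mulVec τc
             + (Wnc * Snc * (Sncᵀ * Wnc * Snc)⁻¹).mulVec τnc
    Scᵀ.mulVec τ = τc ∧ Sncᵀ.mulVec τ = τnc := by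
  have hScWnc : Scᵀ * Wnc = 0 := hWnc ▸ transpose_mul_sub_mul_inv_mul_eq_zero hScW
  have hSncWc : Sncᵀ * Wc = 0 := hWc ▸ transpose_mul_sub_mul_inv_mul_eq_zero hSncW
  refine ⟨transpose_mulVec_mul_inv_mulVec_add hScWc hScWnc τc τnc, ?_⟩
  rw [add_comm]
  exact transpose_mulVec_mul_inv_mulVec_add hSncWnc hSncWc τnc τc

theorem coequal_task_decomposition {n k m : ℕ}
    (W : Matrix (Fin n) (Fin n) ℝ)
    (Sc : Matrix (Fin n) (Fin k) ℝ) (Snc : Matrix (Fin n) (Fin m) ℝ)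
    (hW : W.PosDef) (hWsym : W.IsSymm)
    (hScW : IsUnit (Scᵀ * W * Sc)) (hSncW : IsUnit (Sncᵀ * W * Snc))
    (Wc Wnc : Matrix (Fin n) (Fin n) ℝ)
    (hWc : Wc = W - W * Snc * (Sncᵀ * W * Snc)⁻¹ * Sncᵀ * W)
    (hWnc : Wnc = W - W * Sc * (Scᵀ * W * Sc)⁻¹ * Scᵀ * W)
    (hScWc : IsUnit (Scᵀ * Wc * Sc)) (hSncWnc : IsUnit (Sncᵀ * Wnc * Snc))
    (τc : Fin k → ℝ) (τnc : Fin m → ℝ) :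
    let τ := (Wc * Sc * (Scᵀ * Wc * Sc)⁻¹).mulVec τc
             + (Wnc * Snc * (Sncᵀ * Wnc * Snc)⁻¹).mulVec τnc
    Scᵀ.mulVec τ = τc ∧ Sncᵀ.mulVec τ = τnc :=
  coequal_task_decomposition_general W Sc Snc hScW hSncW Wc Wnc hWc hWnc hScWc hSncWnc τc τnc
end

section
/- Let W be symmetric positive definite, S_c, S_nc full column-rank matrices, W_nc = W - α_c · W S_c (S_cᵀ W S_c)⁻¹ S_cᵀ W with α_c ∈ {0,1}, and assume S_ncᵀ W_nc S_nc invertible. Then for τ = W_nc S_nc (S_ncᵀ W_nc S_nc)⁻¹ τ_nc one has S_cᵀ τ = (1 - α_c) · S_cᵀ W S_nc (S_ncᵀ W S_nc)⁻¹ τ_nc, i.e., the cross-coupling from the non-contact control to the contact subsystem is exactly scaled by (1 - α_c). -/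
/-! Left-multiplying `W_nc = W - α W S_c (S_cᵀ W S_c)⁻¹ S_cᵀ W` by `S_cᵀ` cancels the Gram factor
`S_cᵀ W S_c` against its inverse, so `S_cᵀ W_nc = (1 - α) S_cᵀ W` for every `α`. The cross term is
therefore `(1 - α) S_cᵀ W S_nc (S_ncᵀ W_nc S_nc)⁻¹ τ_nc`, and for `α ∈ {0, 1}` the inner Gram matrix
may be replaced by `S_ncᵀ W S_nc`: either the prefactor vanishes or `W_nc = W`. -/

open Matrix

theorem Matrix.mul_sub_smul_mul_inv_mul {n k : Type*} [Fintype n] [Fintype k] [DecidableEq k]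
    {R : Type*} [CommRing R] (A : Matrix k n R) (W : Matrix n n R) (S : Matrix n k R) (α : R)
    (hAWS : IsUnit (A * W * S)) :
    A * (W - α • (W * S * (A * W * S)⁻¹ * A * W)) = (1 - α) • (A * W) := by
  have hcancel : A * (W * S * (A * W * S)⁻¹ * A * W) = A * W := by
    rw [show A * (W * S * (A * W * S)⁻¹ * A * W) = (A * W * S) * (A * W * S)⁻¹ * (A * W) by
      simp only [Matrix.mul_assoc],
      mul_nonsing_inv _ ((isUnit_iff_isUnit_det _).mp hAWS), Matrix.one_mul]
  rw [Matrix.mul_sub, Matrix.mul_smul, hcancel, sub_smul, one_smul]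

theorem cross_coupling_scaled_by_one_sub_alpha_general {n k m : ℕ}
    (W : Matrix (Fin n) (Fin n) ℝ)
    (Sc : Matrix (Fin n) (Fin k) ℝ) (Snc : Matrix (Fin n) (Fin m) ℝ)
    (hScW : IsUnit (Scᵀ * W * Sc))
    (αc : ℝ) (hα : αc ∈ ({0, 1} : Set ℝ))
    (Wnc : Matrix (Fin n) (Fin n) ℝ)
    (hWnc : Wnc = W - αc • (W * Sc * (Scᵀ * W * Sc)⁻¹ * Scᵀ * W))
    (τnc : Fin m → ℝ) :
    Scᵀ.mulVec ((Wnc * Snc * (Sncᵀ * Wnc * Snc)⁻¹).mulVec τnc)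
      = (1 - αc) • ((Scᵀ * W * Snc * (Sncᵀ * W * Snc)⁻¹).mulVec τnc) := by
  have hcoupling : Scᵀ * Wnc = (1 - αc) • (Scᵀ * W) :=
    hWnc ▸ Matrix.mul_sub_smul_mul_inv_mul Scᵀ W Sc αc hScW
  calc Scᵀ *ᵥ ((Wnc * Snc * (Sncᵀ * Wnc * Snc)⁻¹) *ᵥ τnc)
      = (1 - αc) • ((Scᵀ * W * Snc * (Sncᵀ * Wnc * Snc)⁻¹) *ᵥ τnc) := by
        rw [mulVec_mulVec, ← Matrix.mul_assoc, ← Matrix.mul_assoc, hcoupling,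
          Matrix.smul_mul, Matrix.smul_mul, smul_mulVec]
    _ = (1 - αc) • ((Scᵀ * W * Snc * (Sncᵀ * W * Snc)⁻¹) *ᵥ τnc) := by
        rcases hα with rfl | rfl
        · simp only [hWnc, zero_smul, sub_zero]
        · rw [sub_self, zero_smul, zero_smul]

theorem cross_coupling_scaled_by_one_sub_alpha {n k m : ℕ}
    (W : Matrix (Fin n) (Fin n) ℝ)
    (Sc : Matrix (Fin n) (Fin k) ℝ) (Snc : Matrix (Fin n) (Fin m) ℝ)
    (hW : W.PosDef) (hWsym : W.IsSymm)
    (hScW : IsUnit (Scᵀ * W * Sc)) (hSncW : IsUnit (Sncᵀ * W * Snc))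
    (αc : ℝ) (hα : αc ∈ ({0, 1} : Set ℝ))
    (Wnc : Matrix (Fin n) (Fin n) ℝ)
    (hWnc : Wnc = W - αc • (W * Sc * (Scᵀ * W * Sc)⁻¹ * Scᵀ * W))
    (hSncWnc : IsUnit (Sncᵀ * Wnc * Snc))
    (τnc : Fin m → ℝ) :
    Scᵀ.mulVec ((Wnc * Snc * (Sncᵀ * Wnc * Snc)⁻¹).mulVec τnc)
      = (1 - αc) • ((Scᵀ * W * Snc * (Sncᵀ * W * Snc)⁻¹).mulVec τnc) :=
  cross_coupling_scaled_by_one_sub_alpha_general W Sc Snc hScW αc hα Wnc hWnc τnc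
end
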